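/- Fix a design matrix X ∈ ℝ^{n×d} and a location family y = μ + Z, Z ~ P₀ with mean zero. For a model M ⊆ [d] define the projection parameter θ_M = X_M⁺ μ and its estimate θ̂_M = X_M⁺ y. Let M̂(y) be any model selection rule, let q^β(V) be the 1−β quantile of sup_{v∈V}|v^⊤Z|, let s_ν = 2 q^ν({X_j}_{j=1}^d), let M̂⁺_ν = {M̂(y') : ‖X^⊤y − X^⊤y'‖_∞ ≤ s_ν}, and let V̂⁺_ν = {e_{j·M}^⊤ X_M⁺ / σ̂_{j·M} : M ∈ M̂⁺_ν, j ∈ M} with σ̂_{j·M} = sqrt(e_{j·M}^⊤ (X_M^⊤X_M)^{−1} e_{j·M}). Then for 0 < ν < α < 1, P_μ{θ_{j·M̂} ∈ (θ̂_{j·M̂} ± q^{(α−ν)}(V̂⁺_ν) σ̂_{j·M̂}) for all j ∈ M̂} ≥ 1 − α. -/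

import Mathlib

/-!
On the event `‖Xᵀ Z‖_∞ ≤ q^ν({X_j})`, of probability at least `1 - ν`, the selected model
`M̂(μ + Z)` is among the models selected within `s_ν / 2` of `μ`, and by the triangle inequality
all of these belong to `M̂⁺_ν(μ + Z)`. Their normalised contrasts form a fixed set `V_μ ⊆ V̂⁺_ν`,
so on the event `sup_{v ∈ V_μ} |vᵀ Z| ≤ q^{α-ν}(V_μ)`, of probability at least `1 - (α - ν)`,
every coordinate error `|e_{j·M̂}ᵀ X_{M̂}⁺ Z|` is at most
`q^{α-ν}(V_μ) σ̂_{j·M̂} ≤ q^{α-ν}(V̂⁺_ν) σ̂_{j·M̂}`. A union bound combines the two events.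
For a finite `V` the quantile is attained, since `t ↦ P(sup_{v ∈ V} |vᵀ Z| ≤ t)` is right-continuous.
-/

open MeasureTheory Matrix Set

/-- Submatrix of columns of `X` indexed by a model `M`. -/
def colSub {n d : ℕ} (X : Matrix (Fin n) (Fin d) ℝ) (M : Finset (Fin d)) :
    Matrix (Fin n) {j // j ∈ M} ℝ := fun i j => X i j.val

/-- Pseudoinverse `(X_Mᵀ X_M)⁻¹ X_Mᵀ` of the full-column-rank submatrix `X_M`. -/
noncomputable def pinvSub {n d : ℕ} (X : Matrix (Fin n) (Fin d) ℝ) (M : Finset (Fin d)) :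
    Matrix {j // j ∈ M} (Fin n) ℝ :=
  ((colSub X M)ᵀ * colSub X M)⁻¹ * (colSub X M)ᵀ

/-- Standard error scale `σ̂_{j·M} = sqrt(e_{j·M}ᵀ (X_Mᵀ X_M)⁻¹ e_{j·M})`. -/
noncomputable def sigmaHat {n d : ℕ} (X : Matrix (Fin n) (Fin d) ℝ) (M : Finset (Fin d))
    (j : {j // j ∈ M}) : ℝ :=
  Real.sqrt ((((colSub X M)ᵀ * colSub X M)⁻¹) j j)

section Quantile

variable {ι : Type*} [Fintype ι]

def supAbsDotLE (V : Set (ι → ℝ)) (t : ℝ) : Set (ι → ℝ) := {z | ∀ v ∈ V, |v ⬝ᵥ z| ≤ t}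

def coverageLevels (P : Measure (ι → ℝ)) (β : ℝ) (V : Set (ι → ℝ)) : Set ℝ :=
  {t | ENNReal.ofReal (1 - β) ≤ P (supAbsDotLE V t)}

/-- The paper's `q^β(V)`, the `1 - β` quantile of `sup_{v ∈ V} |v ⬝ᵥ Z|` for `Z ~ P`. -/
noncomputable def quantile (P : Measure (ι → ℝ)) (β : ℝ) (V : Set (ι → ℝ)) : ℝ :=
  sInf (coverageLevels P β V)

lemma supAbsDotLE_mono {V W : Set (ι → ℝ)} {s t : ℝ} (hVW : V ⊆ W) (hst : s ≤ t) :
    supAbsDotLE W s ⊆ supAbsDotLE V t :=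
  fun _ hz v hv => (hz v (hVW hv)).trans hst

lemma supAbsDotLE_eq_of_neg (V : Set (ι → ℝ)) {s t : ℝ} (hs : s < 0) (ht : t < 0) :
    supAbsDotLE V s = supAbsDotLE V t := by
  have key : ∀ r < (0 : ℝ), supAbsDotLE V r = {_z | V = ∅} := fun r hr => by
    ext z
    simp only [supAbsDotLE, Set.mem_ofPred_eq, Set.eq_empty_iff_forall_notMem]
    exact forall₂_congr fun v _ => iff_false_intro (by linarith [abs_nonneg (v ⬝ᵥ z)])
  rw [key s hs, key t ht]

lemma measurableSet_supAbsDotLE {V : Set (ι → ℝ)} (hV : V.Finite) (t : ℝ) :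
    MeasurableSet (supAbsDotLE V t) := by
  have : supAbsDotLE V t = ⋂ v ∈ V, {z | |v ⬝ᵥ z| ≤ t} := by ext; simp [supAbsDotLE]
  rw [this]
  exact .biInter hV.countable fun v _ =>
    measurableSet_le (by fun_prop) measurable_const

lemma iUnion_supAbsDotLE_natCast {V : Set (ι → ℝ)} (hV : V.Finite) :
    ⋃ k : ℕ, supAbsDotLE V k = Set.univ := by
  refine Set.eq_univ_of_forall fun z => Set.mem_iUnion.2 ?_
  obtain ⟨c, hc⟩ := (hV.image fun v => |v ⬝ᵥ z|).bddAbove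
  obtain ⟨k, hk⟩ := exists_nat_ge c
  exact ⟨k, fun v hv => (hc ⟨v, hv, rfl⟩).trans hk⟩

lemma iInter_supAbsDotLE_gt (V : Set (ι → ℝ)) (t : ℝ) :
    ⋂ r > t, supAbsDotLE V r = supAbsDotLE V t := by
  ext z
  simp only [Set.mem_iInter, supAbsDotLE, Set.mem_ofPred_eq]
  exact ⟨fun h v hv => le_of_forall_gt_imp_ge_of_dense fun r hr => h r hr v hv,
    fun h r hr v hv => (h v hv).trans hr.le⟩

variable (P : Measure (ι → ℝ))

lemma quantile_nonneg (β : ℝ) (V : Set (ι → ℝ)) : 0 ≤ quantile P β V := by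
  set S := coverageLevels P β V
  by_cases hS : ∀ t ∈ S, 0 ≤ t
  · exact Real.sInf_nonneg hS
  push Not at hS
  obtain ⟨t, ht, ht0⟩ := hS
  -- Below zero the event no longer depends on the level, so `S` is unbounded below.
  have hunbdd : ¬BddBelow S := by
    rintro ⟨b, hb⟩
    have hs : min b t - 1 < 0 := by linarith [min_le_right b t]
    have hmem : min b t - 1 ∈ S := by
      simpa only [S, coverageLevels, Set.mem_ofPred_eq, supAbsDotLE_eq_of_neg V hs ht0] using ht
    linarith [hb hmem, min_le_left b t]
  exact (Real.sInf_of_not_bddBelow hunbdd).ge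

lemma coverageLevels_nonempty [IsProbabilityMeasure P] {V : Set (ι → ℝ)} (hV : V.Finite)
    {β : ℝ} (hβ : 0 < β) : (coverageLevels P β V).Nonempty := by
  have hmono : Monotone fun k : ℕ => supAbsDotLE V k :=
    fun a b hab => supAbsDotLE_mono subset_rfl (by exact_mod_cast hab)
  have hlim : ⨆ k : ℕ, P (supAbsDotLE V k) = 1 := by
    rw [← hmono.measure_iUnion, iUnion_supAbsDotLE_natCast hV, measure_univ]
  have hlt : ENNReal.ofReal (1 - β) < ⨆ k : ℕ, P (supAbsDotLE V k) := by
    rw [hlim]; exact ENNReal.ofReal_lt_one.2 (by linarith)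
  obtain ⟨k, hk⟩ := lt_iSup_iff.mp hlt
  exact ⟨k, hk.le⟩

lemma le_measure_supAbsDotLE_of_forall_gt [IsFiniteMeasure P] {V : Set (ι → ℝ)} (hV : V.Finite)
    {c : ENNReal} {t : ℝ} (h : ∀ r > t, c ≤ P (supAbsDotLE V r)) :
    c ≤ P (supAbsDotLE V t) := by
  have hlim := tendsto_measure_biInter_gt (μ := P) (s := supAbsDotLE V) (a := t)
    (fun r _ => (measurableSet_supAbsDotLE hV r).nullMeasurableSet)
    (fun _ _ _ hij => supAbsDotLE_mono subset_rfl hij) ⟨t + 1, by linarith, measure_ne_top _ _⟩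
  rw [iInter_supAbsDotLE_gt] at hlim
  exact ge_of_tendsto hlim (eventually_nhdsWithin_of_forall h)

lemma le_measure_supAbsDotLE_quantile [IsProbabilityMeasure P] {V : Set (ι → ℝ)} (hV : V.Finite)
    {β : ℝ} (hβ : 0 < β) : ENNReal.ofReal (1 - β) ≤ P (supAbsDotLE V (quantile P β V)) := by
  refine le_measure_supAbsDotLE_of_forall_gt P hV fun r hr => ?_
  obtain ⟨s, hs, hsr⟩ := exists_lt_of_csInf_lt (coverageLevels_nonempty P hV hβ) hr
  exact hs.trans (measure_mono (supAbsDotLE_mono subset_rfl hsr.le))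

lemma quantile_mono [IsProbabilityMeasure P] {V W : Set (ι → ℝ)} (hVW : V ⊆ W) (hW : W.Finite)
    {β : ℝ} (hβ : 0 < β) : quantile P β V ≤ quantile P β W := by
  by_cases hbdd : BddBelow (coverageLevels P β V)
  · exact csInf_le_csInf hbdd (coverageLevels_nonempty P hW hβ) fun t ht =>
      ht.trans (measure_mono (supAbsDotLE_mono hVW le_rfl))
  · rw [quantile, Real.sInf_of_not_bddBelow hbdd]
    exact quantile_nonneg P β W

end Quantile

lemma ofReal_one_sub_add_le_measure_inter {Ω : Type*} [MeasurableSpace Ω] {P : Measure Ω}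
    [IsProbabilityMeasure P] {A B : Set Ω} (hB : MeasurableSet B) {a b : ℝ}
    (hA : ENNReal.ofReal (1 - a) ≤ P A) (hB' : ENNReal.ofReal (1 - b) ≤ P B) :
    ENNReal.ofReal (1 - (a + b)) ≤ P (A ∩ B) := by
  have hAr : 1 - a ≤ P.real A := (le_max_left _ _).trans (ENNReal.toReal_mono (by finiteness) hA)
  have hBr : 1 - b ≤ P.real B := (le_max_left _ _).trans (ENNReal.toReal_mono (by finiteness) hB')
  have hsum := measureReal_union_add_inter (μ := P) (s := A) hB
  have hle : P.real (A ∪ B) ≤ 1 := measureReal_le_one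
  exact ENNReal.ofReal_le_of_le_toReal (by rw [← measureReal_def]; linarith)

section Selection

variable {E F κ : Type*} [SeminormedAddCommGroup F]

/-- The paper's `M̂⁺_ν(y)` is `selectedNear (Xᵀ *ᵥ ·) M̂ y s_ν`. -/
def selectedNear (T : E → F) (sel : E → κ) (y : E) (s : ℝ) : Set κ :=
  {M | ∃ y', ‖T y - T y'‖ ≤ s ∧ M = sel y'}

lemma selectedNear_subset_of_norm_le {T : E → F} {sel : E → κ} {y y₀ : E} {r : ℝ}
    (h : ‖T y - T y₀‖ ≤ r) (s : ℝ) :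
    selectedNear T sel y₀ s ⊆ selectedNear T sel y (r + s) := by
  rintro _ ⟨y', hy', rfl⟩
  exact ⟨y', (norm_sub_le_norm_sub_add_norm_sub _ _ _).trans (add_le_add h hy'), rfl⟩

end Selection

section Regression

variable {n d : ℕ} (X : Matrix (Fin n) (Fin d) ℝ)

/-- The paper's `V̂⁺_ν(y)` is `contrastSet X (M̂⁺_ν(y))`. -/
def contrastSet (𝓜 : Set (Finset (Fin d))) : Set (Fin n → ℝ) :=
  {v | ∃ M ∈ 𝓜, ∃ j : {j // j ∈ M}, v = fun i => pinvSub X M j i / sigmaHat X M j}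

lemma contrastSet_finite (𝓜 : Set (Finset (Fin d))) : (contrastSet X 𝓜).Finite := by
  refine (Set.finite_iUnion fun M : Finset (Fin d) =>
    Set.finite_range fun j : {j // j ∈ M} => fun i => pinvSub X M j i / sigmaHat X M j).subset ?_
  rintro _ ⟨M, _, j, rfl⟩
  exact Set.mem_iUnion.2 ⟨M, j, rfl⟩

lemma contrastSet_mono {𝓜 𝓝 : Set (Finset (Fin d))} (h : 𝓜 ⊆ 𝓝) :
    contrastSet X 𝓜 ⊆ contrastSet X 𝓝 := by
  rintro _ ⟨M, hM, j, rfl⟩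
  exact ⟨M, h hM, j, rfl⟩

lemma finite_columns : {v : Fin n → ℝ | ∃ j : Fin d, v = fun i => X i j}.Finite :=
  (Set.finite_range fun j i => X i j).subset fun _ ⟨j, hj⟩ => ⟨j, hj.symm⟩

lemma norm_transpose_mulVec_le {z : Fin n → ℝ} {t : ℝ} (ht : 0 ≤ t)
    (hz : z ∈ supAbsDotLE {v : Fin n → ℝ | ∃ j : Fin d, v = fun i => X i j} t) :
    ‖Xᵀ *ᵥ z‖ ≤ t :=
  (pi_norm_le_iff_of_nonneg ht).2 fun j => hz _ ⟨j, rfl⟩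

lemma sigmaHat_pos {M : Finset (Fin d)} (hM : IsUnit ((colSub X M)ᵀ * colSub X M).det)
    (j : {j // j ∈ M}) : 0 < sigmaHat X M j := by
  classical
  have hpsd : ((colSub X M)ᵀ * colSub X M).PosSemidef := by
    simpa using posSemidef_conjTranspose_mul_self (colSub X M)
  have hpd := hpsd.posDef_iff_isUnit.2 ((isUnit_iff_isUnit_det _).2 hM)
  exact Real.sqrt_pos.2 hpd.inv.diag_pos

end Regression

lemma abs_dotProduct_le_of_abs_div_le {ι : Type*} [Fintype ι] {w z : ι → ℝ} {s t : ℝ}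
    (hs : 0 < s) (h : |(fun i => w i / s) ⬝ᵥ z| ≤ t) : |w ⬝ᵥ z| ≤ t * s := by
  have hdiv : (fun i => w i / s) ⬝ᵥ z = (w ⬝ᵥ z) / s := by
    simp only [dotProduct, div_mul_eq_mul_div, Finset.sum_div]
  rwa [hdiv, abs_div, abs_of_pos hs, div_le_iff₀ hs] at h

theorem posi_locally_simultaneous_general
    {n d : ℕ} (X : Matrix (Fin n) (Fin d) ℝ)
    (hrank : ∀ M : Finset (Fin d), IsUnit ((colSub X M)ᵀ * colSub X M).det)
    (P0 : Measure (Fin n → ℝ)) [IsProbabilityMeasure P0]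
    (Mhat : (Fin n → ℝ) → Finset (Fin d))
    (q : ℝ → Set (Fin n → ℝ) → ℝ)
    (hq : ∀ β V, q β V =
      sInf {t : ℝ | ENNReal.ofReal (1 - β) ≤ P0 {z | ∀ v ∈ V, |v ⬝ᵥ z| ≤ t}})
    (μ : Fin n → ℝ) (α ν : ℝ) (hν : 0 < ν) (hνα : ν < α)
    (sν : ℝ) (hsν : sν = 2 * q ν {v | ∃ j : Fin d, v = fun i => X i j})
    (Mplus : (Fin n → ℝ) → Set (Finset (Fin d)))
    (hMplus : ∀ y, Mplus y = {M | ∃ y', ‖Xᵀ *ᵥ y - Xᵀ *ᵥ y'‖ ≤ sν ∧ M = Mhat y'})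
    (Vplus : (Fin n → ℝ) → Set (Fin n → ℝ))
    (hVplus : ∀ y, Vplus y = {v | ∃ M ∈ Mplus y, ∃ j : {j // j ∈ M},
      v = fun i => pinvSub X M j i / sigmaHat X M j}) :
    ENNReal.ofReal (1 - α) ≤ P0 {z | ∀ j : {j // j ∈ Mhat (μ + z)},
      |(pinvSub X (Mhat (μ + z)) *ᵥ (μ + z)) j - (pinvSub X (Mhat (μ + z)) *ᵥ μ) j| ≤
        q (α - ν) (Vplus (μ + z)) * sigmaHat X (Mhat (μ + z)) j} := by
  obtain rfl : q = quantile P0 := funext₂ hq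
  obtain rfl : Vplus = fun y => contrastSet X (Mplus y) := funext hVplus
  obtain rfl : Mplus = fun y => selectedNear (Xᵀ *ᵥ ·) Mhat y sν := funext hMplus
  set cols := {v : Fin n → ℝ | ∃ j : Fin d, v = fun i => X i j}
  set t := quantile P0 ν cols
  -- `V⁺` built around the true mean `μ` with half the radius: it is fixed, not data dependent.
  set Vμ := contrastSet X (selectedNear (Xᵀ *ᵥ ·) Mhat μ t)
  have hVμ_fin : Vμ.Finite := contrastSet_finite X _
  have hcover := ofReal_one_sub_add_le_measure_inter (measurableSet_supAbsDotLE hVμ_fin _)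
    (le_measure_supAbsDotLE_quantile P0 (finite_columns X) hν)
    (le_measure_supAbsDotLE_quantile P0 hVμ_fin (sub_pos.2 hνα))
  rw [add_sub_cancel] at hcover
  refine hcover.trans (measure_mono ?_)
  rintro z ⟨hzX, hzV⟩ j
  have hXz : ‖Xᵀ *ᵥ (μ + z) - Xᵀ *ᵥ μ‖ ≤ t := by
    rw [mulVec_add, add_sub_cancel_left]
    exact norm_transpose_mulVec_le X (quantile_nonneg P0 ν cols) hzX
  have hsel : Mhat (μ + z) ∈ selectedNear (Xᵀ *ᵥ ·) Mhat μ t :=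
    ⟨μ + z, by rwa [norm_sub_rev], rfl⟩
  have hVμ : Vμ ⊆ contrastSet X (selectedNear (Xᵀ *ᵥ ·) Mhat (μ + z) sν) :=
    contrastSet_mono X (by rw [hsν, two_mul]; exact selectedNear_subset_of_norm_le hXz t)
  have hσ := sigmaHat_pos X (hrank _) j
  rw [mulVec_add, Pi.add_apply, add_sub_cancel_left]
  calc |pinvSub X (Mhat (μ + z)) j ⬝ᵥ z|
        ≤ quantile P0 (α - ν) Vμ * sigmaHat X (Mhat (μ + z)) j :=
        abs_dotProduct_le_of_abs_div_le hσ (hzV _ ⟨_, hsel, j, rfl⟩)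
    _ ≤ _ := mul_le_mul_of_nonneg_right
        (quantile_mono P0 hVμ (contrastSet_finite X _) (sub_pos.2 hνα)) hσ.le

/-- Locally simultaneous post-selection inference for projection parameters in
linear regression (Corollary on inference after model selection). -/
theorem posi_locally_simultaneous
    {n d : ℕ} (X : Matrix (Fin n) (Fin d) ℝ)
    (hrank : ∀ M : Finset (Fin d), IsUnit ((colSub X M)ᵀ * colSub X M).det)
    (P0 : Measure (Fin n → ℝ)) [IsProbabilityMeasure P0]
    (hmean : ∀ i, ∫ z, z i ∂P0 = 0)
    (Mhat : (Fin n → ℝ) → Finset (Fin d))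
    (q : ℝ → Set (Fin n → ℝ) → ℝ)
    (hq : ∀ β V, q β V =
      sInf {t : ℝ | ENNReal.ofReal (1 - β) ≤ P0 {z | ∀ v ∈ V, |v ⬝ᵥ z| ≤ t}})
    (μ : Fin n → ℝ) (α ν : ℝ) (hν : 0 < ν) (hνα : ν < α) (hα : α < 1)
    (sν : ℝ) (hsν : sν = 2 * q ν {v | ∃ j : Fin d, v = fun i => X i j})
    (Mplus : (Fin n → ℝ) → Set (Finset (Fin d)))
    (hMplus : ∀ y, Mplus y = {M | ∃ y', ‖Xᵀ *ᵥ y - Xᵀ *ᵥ y'‖ ≤ sν ∧ M = Mhat y'})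
    (Vplus : (Fin n → ℝ) → Set (Fin n → ℝ))
    (hVplus : ∀ y, Vplus y = {v | ∃ M ∈ Mplus y, ∃ j : {j // j ∈ M},
      v = fun i => pinvSub X M j i / sigmaHat X M j}) :
    ENNReal.ofReal (1 - α) ≤ P0 {z | ∀ j : {j // j ∈ Mhat (μ + z)},
      |(pinvSub X (Mhat (μ + z)) *ᵥ (μ + z)) j - (pinvSub X (Mhat (μ + z)) *ᵥ μ) j| ≤
        q (α - ν) (Vplus (μ + z)) * sigmaHat X (Mhat (μ + z)) j} :=
  posi_locally_simultaneous_general X hrank P0 Mhat q hq μ α ν hν hνα sν hsν Mplus hMplus Vplus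
    hVplus
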